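/- For every f ∈ M and t ≥ 0: u^{f'}(t) = (u^f)'(t) and u^{f''}(t) = (u^f)''(t) = −L₀*u^f(t), where f' and f'' are the time derivatives of the control (which again belong to M). -/

import Mathlib

open MeasureTheory
open scoped ComplexInnerProductSpace

variable {H : Type*} [NormedAddCommGroup H] [InnerProductSpace ℂ H] [CompleteSpace H]

/-- `Iᵗ = L^{-1/2}·sin(t·L^{1/2})`, realized by applying the continuous functional calculus of
the bounded positive self-adjoint operator `T = L⁻¹` to the continuous function
`hₜ(x) = √x·sin(t/√x)` (for `x > 0`, extended by `0` at `x ≤ 0`). -/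
noncomputable def waveOp (T : H →L[ℂ] H) (t : ℝ) : H →L[ℂ] H :=
  cfc (fun x : ℝ => if 0 < x then Real.sqrt x * Real.sin (t / Real.sqrt x) else 0) T

/-- The class `M` of smooth controls: smooth `K`-valued functions of time vanishing near `t = 0`
(all time functions are extended by zero to `t < 0`). -/
def IsSmoothControl (K : Submodule ℂ H) (f : ℝ → H) : Prop :=
  ContDiff ℝ (⊤ : ℕ∞) f ∧ (∀ t, f t ∈ K) ∧ ∃ ε > 0, ∀ t ≤ ε, f t = 0

/-- The wave `u^f(t) = -f(t) + ∫₀ᵗ I^{t-s} f''(s) ds` (Bochner integral). -/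
noncomputable def wave (T : H →L[ℂ] H) (f : ℝ → H) (t : ℝ) : H :=
  -f t + ∫ s in (0:ℝ)..t, waveOp T (t - s) (deriv (deriv f) s)

/-- The context of the paper: `L₀` is a closed, densely defined, symmetric, positive definite
operator in the Hilbert space `H`; `L` is its Friedrichs (self-adjoint) extension,
`L₀ ⊆ L ⊆ L₀*`, with an everywhere defined bounded self-adjoint positive injective inverse `T`;
`K = ker L₀*`.  The boundary operators are `Γ₁y = T(L₀*y) − y` and `Γ₂y = P(L₀*y)`, where `P`
is the orthogonal projection onto `K`. -/
structure Setting (L₀ L : H →ₗ.[ℂ] H) (T : H →L[ℂ] H) (K : Submodule ℂ H) : Prop where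
  dense_domain : Dense (L₀.domain : Set H)
  closed : L₀.IsClosed
  symmetric : ∀ x y : L₀.domain, ⟪L₀ x, (y : H)⟫ = ⟪(x : H), L₀ y⟫
  posdef : ∃ γ : ℝ, 0 < γ ∧ ∀ x : L₀.domain, γ * ‖(x : H)‖ ^ 2 ≤ (⟪L₀ x, (x : H)⟫).re
  extension : L₀ ≤ L
  le_adjoint : L ≤ L₀.adjoint
  selfadjoint : L.adjoint = L
  T_selfadjoint : IsSelfAdjoint T
  T_positive : ∀ x : H, 0 ≤ (⟪T x, x⟫).re
  T_injective : Function.Injective T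
  T_inv_left : ∀ x : L.domain, T (L x) = x
  T_mem_domain : ∀ y : H, T y ∈ L.domain
  T_inv_right : ∀ y : H, ∀ hy : T y ∈ L.domain, L ⟨T y, hy⟩ = y
  kernel : ∀ x : H, x ∈ K ↔ ∃ hx : x ∈ L₀.adjoint.domain, L₀.adjoint ⟨x, hx⟩ = 0

/-- The reachable set `U^τ = {u^f(τ) : f ∈ M}` for `τ ≥ 0`, and `{0}` for `τ < 0`. -/
def reachSet (K : Submodule ℂ H) (T : H →L[ℂ] H) (τ : ℝ) : Set H :=
  if 0 ≤ τ then {x | ∃ f, IsSmoothControl K f ∧ wave T f τ = x} else {0}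

/-- The total reachable set `U = span ⋃_{τ>0} U^τ`. -/
def reachSpan (K : Submodule ℂ H) (T : H →L[ℂ] H) : Submodule ℂ H :=
  Submodule.span ℂ (⋃ τ ∈ Set.Ioi (0:ℝ), reachSet K T τ)

/-- The wave `v^ψ(t) = ∫₀ᵗ I^{t-s} ψ(s) ds` produced by a source `ψ` in system `β`. -/
noncomputable def sourceWave (T : H →L[ℂ] H) (ψ : ℝ → H) (t : ℝ) : H :=
  ∫ s in (0:ℝ)..t, waveOp T (t - s) (ψ s)

/-!
Differentiating under the integral sign, after the substitution `σ = t - s` (legitimate because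
`f` vanishes near `0`), shows `(u^f)' = u^{f'}`. The operator `Iᵗ` is only Lipschitz in `t`, but
`T Iᵗ` and `T cos(t L^{1/2})` are differentiable, with derivatives `T cos(t L^{1/2})` and `-Iᵗ`;
integrating by parts twice against them gives `u^f(t) = -f(t) - T u^{f''}(t)`. Since
`f(t) ∈ K = ker L₀*` and `L₀* T = 1`, this puts `u^f(t)` in `dom L₀*` with
`L₀* u^f(t) = -u^{f''}(t)`.
-/

open Filter Topology Set

section Calculus

variable {E : Type*} [NormedAddCommGroup E] [NormedSpace ℝ E]

theorem hasDerivAt_of_norm_sub_sub_le_sq {φ : ℝ → E} {v : E} {t C : ℝ}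
    (h : ∀ δ, ‖φ (t + δ) - φ t - δ • v‖ ≤ C * δ ^ 2) : HasDerivAt φ v t := by
  rw [hasDerivAt_iff_isLittleO_nhds_zero]
  refine (Asymptotics.IsBigO.of_bound C (Eventually.of_forall fun δ => ?_)).trans_isLittleO
    (Asymptotics.isLittleO_pow_id one_lt_two)
  simpa [abs_of_nonneg (sq_nonneg δ)] using h δ

theorem norm_sub_sub_smul_le_sq {φ φ' : ℝ → E} {t C : ℝ} (hφ : ∀ s, HasDerivAt φ (φ' s) s)
    (hφ' : ∀ s, ‖φ' s - φ' t‖ ≤ C * |s - t|) (δ : ℝ) :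
    ‖φ (t + δ) - φ t - δ • φ' t‖ ≤ C * δ ^ 2 := by
  have hC : 0 ≤ C := by simpa using (norm_nonneg _).trans (hφ' (t + 1))
  have hd : ∀ s, HasDerivAt (fun s => φ s - (s - t) • φ' t) (φ' s - φ' t) s := fun s => by
    have := (hφ s).sub (((hasDerivAt_id' s).sub_const t).smul_const (φ' t))
    rwa [one_smul] at this
  have hbound : ∀ s ∈ uIcc t (t + δ), ‖φ' s - φ' t‖ ≤ C * |δ| := fun s hs =>
    (hφ' s).trans (mul_le_mul_of_nonneg_left (by simpa using abs_sub_left_of_mem_uIcc hs) hC)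
  have := Convex.norm_image_sub_le_of_norm_hasDerivWithin_le (fun s _ => (hd s).hasDerivWithinAt)
    hbound (convex_uIcc t (t + δ)) left_mem_uIcc right_mem_uIcc
  simpa [sq, mul_assoc, sub_right_comm] using this

theorem deriv_mem_of_forall_mem {K : Submodule ℝ E}
    (hK : IsClosed (K : Set E)) {f : ℝ → E} (hf : ∀ t, f t ∈ K) (t : ℝ) :
    deriv f t ∈ K := by
  by_cases hd : DifferentiableAt ℝ f t
  · refine hK.mem_of_tendsto (hasDerivAt_iff_tendsto_slope.1 hd.hasDerivAt)
      (Eventually.of_forall fun s => ?_)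
    rw [slope_def_module]
    exact K.smul_mem _ (K.sub_mem (hf s) (hf t))
  · rw [deriv_zero_of_not_differentiableAt hd]
    exact K.zero_mem

end Calculus

section CFC

variable {A : Type*} [CStarAlgebra A]

theorem hasDerivAt_cfc_of_lipschitz_deriv (a : A) {φ φ' : ℝ → ℝ → ℝ} {t C : ℝ}
    (hφ : ∀ x ∈ spectrum ℝ a, ∀ s, HasDerivAt (φ · x) (φ' s x) s)
    (hφ' : ∀ x ∈ spectrum ℝ a, ∀ s, |φ' s x - φ' t x| ≤ C * |s - t|) (hC : 0 ≤ C)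
    (hcont : ∀ s, Continuous (φ s)) (hcont' : Continuous (φ' t)) :
    HasDerivAt (fun s => cfc (φ s) a) (cfc (φ' t) a) t := by
  refine hasDerivAt_of_norm_sub_sub_le_sq (C := C) fun δ => ?_
  rw [← cfc_sub (φ (t + δ)) (φ t) a (hcont _).continuousOn (hcont t).continuousOn,
    ← cfc_smul δ (φ' t) a, ← cfc_sub _ _ a]
  refine norm_cfc_le (by positivity) fun x hx => ?_
  simpa using norm_sub_sub_smul_le_sq (φ := (φ · x)) (hφ x hx) (by simpa using hφ' x hx) δ

end CFC

section Convolution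

variable {E F : Type*} [NormedAddCommGroup E] [NormedSpace ℂ E]
  [NormedAddCommGroup F] [NormedSpace ℂ F]

theorem HasDerivAt.clm_apply_of_complex {c : ℝ → E →L[ℂ] F} {c' : E →L[ℂ] F} {u : ℝ → E} {u' : E}
    {x : ℝ} (hc : HasDerivAt c c' x) (hu : HasDerivAt u u' x) :
    HasDerivAt (fun y => c y (u y)) (c' (u x) + c x u') x :=
  ((ContinuousLinearMap.restrictScalarsL ℂ E F ℝ ℝ).hasFDerivAt.comp_hasDerivAt x hc).clm_apply hu

theorem integral_comp_sub_apply_eq_of_le {W : ℝ → E →L[ℂ] F} (hW : Continuous W) {u : ℝ → E}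
    (hu : Continuous u) (hu0 : ∀ s < 0, u s = 0) {τ R : ℝ} (hτR : τ ≤ R) :
    ∫ s in (0 : ℝ)..τ, W (τ - s) (u s) = ∫ σ in (0 : ℝ)..R, W σ (u (τ - σ)) := by
  have hint : ∀ a b, IntervalIntegrable (fun σ => W σ (u (τ - σ))) volume a b := fun a b =>
    (hW.clm_apply (hu.comp (continuous_const.sub continuous_id))).intervalIntegrable a b
  have htail : ∫ σ in τ..R, W σ (u (τ - σ)) = 0 := by
    refine intervalIntegral.integral_zero_ae (Eventually.of_forall fun σ hσ => ?_)
    rw [uIoc_of_le hτR] at hσ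
    rw [hu0 _ (sub_neg.2 hσ.1), map_zero]
  rw [← intervalIntegral.integral_add_adjacent_intervals (hint 0 τ) (hint τ R), htail, add_zero]
  simpa using intervalIntegral.integral_comp_sub_left (fun σ => W σ (u (τ - σ))) (a := 0) (b := τ) τ

/- `W` need not be differentiable: after `σ = τ - s` the upper limit can be frozen at `t + 1`, and
the derivative falls on `g` under the integral sign. -/
theorem hasDerivAt_integral_comp_sub_apply [CompleteSpace F] {W : ℝ → E →L[ℂ] F}
    (hW : Continuous W) {g : ℝ → E} (hg : ContDiff ℝ 1 g) (hg0 : ∀ s < 0, g s = 0) (t : ℝ) :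
    HasDerivAt (fun τ => ∫ s in (0 : ℝ)..τ, W (τ - s) (g s))
      (∫ s in (0 : ℝ)..t, W (t - s) (deriv g s)) t := by
  have hg' : Continuous (deriv g) := hg.continuous_deriv le_rfl
  have hg0' : ∀ s < 0, deriv g s = 0 := fun s hs => by
    have hloc : g =ᶠ[𝓝 s] fun _ => 0 := (eventually_lt_nhds hs).mono hg0
    rw [hloc.deriv_eq, deriv_const]
  have hR : t < t + 1 := lt_add_one t
  rw [integral_comp_sub_apply_eq_of_le hW hg' hg0' hR.le]
  refine HasDerivAt.congr_of_eventuallyEq ?_ <| (eventually_lt_nhds hR).mono fun τ hτ =>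
    integral_comp_sub_apply_eq_of_le hW hg.continuous hg0 hτ.le
  obtain ⟨C, hC⟩ := ((isCompact_closedBall t 1).prod (isCompact_uIcc (a := 0) (b := t + 1))
    |>.exists_bound_of_continuousOn (f := fun p : ℝ × ℝ => W p.2 (deriv g (p.1 - p.2)))
      (Continuous.continuousOn (by fun_prop)))
  refine (intervalIntegral.hasDerivAt_integral_of_dominated_loc_of_deriv_le
    (bound := fun _ => C) (Metric.closedBall_mem_nhds t one_pos)
    (Eventually.of_forall fun τ => (by fun_prop : Continuous _).aestronglyMeasurable)
    ((by fun_prop : Continuous _).intervalIntegrable 0 (t + 1))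
    (by fun_prop : Continuous _).aestronglyMeasurable
    (Eventually.of_forall fun σ hσ τ hτ => hC (τ, σ) ⟨hτ, uIoc_subset_uIcc hσ⟩)
    intervalIntegrable_const (Eventually.of_forall fun σ _ τ _ => ?_)).2
  simpa using (hasDerivAt_const τ (W σ)).clm_apply_of_complex
    (((hg.differentiable one_ne_zero) (τ - σ)).hasDerivAt.comp_sub_const τ σ)

theorem integral_comp_sub_apply_add_eq [CompleteSpace F] {P J W : ℝ → E →L[ℂ] F}
    (hP : ∀ t, HasDerivAt P (J t) t) (hJ : ∀ t, HasDerivAt J (-W t) t) (hW : Continuous W)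
    {g : ℝ → E} (hg : ContDiff ℝ 2 g) (hg0 : g 0 = 0) (hg0' : deriv g 0 = 0) (t : ℝ) :
    (∫ s in (0 : ℝ)..t, P (t - s) (deriv (deriv g) s)) + ∫ s in (0 : ℝ)..t, W (t - s) (g s)
      = P 0 (deriv g t) + J 0 (g t) := by
  have hg1 : ContDiff ℝ 1 (deriv g) := hg.deriv' (n := 1)
  have hP' : Continuous P := continuous_iff_continuousAt.2 fun t => (hP t).continuousAt
  have hderiv : ∀ s, HasDerivAt (fun s => P (t - s) (deriv g s) + J (t - s) (g s))
      (P (t - s) (deriv (deriv g) s) + W (t - s) (g s)) s := fun s => by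
    have hPs := ((hP (t - s)).comp_const_sub t s).clm_apply_of_complex
      ((hg1.differentiable one_ne_zero s).hasDerivAt)
    have hJs := ((hJ (t - s)).comp_const_sub t s).clm_apply_of_complex
      ((hg.differentiable two_ne_zero s).hasDerivAt)
    refine (hPs.add hJs).congr_deriv ?_
    simp only [neg_neg, neg_apply]
    abel
  have hcont₁ : Continuous fun s => P (t - s) (deriv (deriv g) s) := by
    have := hg1.continuous_deriv le_rfl
    fun_prop
  have hcont₂ : Continuous fun s => W (t - s) (g s) := by
    have := hg.continuous
    fun_prop
  rw [← intervalIntegral.integral_add (hcont₁.intervalIntegrable 0 t)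
      (hcont₂.intervalIntegrable 0 t),
    intervalIntegral.integral_eq_sub_of_hasDerivAt (fun s _ => hderiv s)
      ((hcont₁.add hcont₂).intervalIntegrable 0 t)]
  simp [hg0, hg0']

end Convolution

theorem continuous_mul_comp_div {a b u : ℝ → ℝ} (ha : Continuous a) (hb : Continuous b)
    (hu : Continuous u) (hu1 : ∀ y, |u y| ≤ 1) (hab : ∀ x, b x = 0 → a x = 0) (t : ℝ) :
    Continuous fun x => a x * u (t / b x) := by
  refine continuous_iff_continuousAt.2 fun x => ?_
  by_cases hbx : b x = 0
  · have hax : a x = 0 := hab x hbx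
    refine tendsto_iff_norm_sub_tendsto_zero.2 (squeeze_zero_norm (a := fun y => ‖a y‖) ?_ ?_)
    · intro y
      simpa [hax, abs_mul] using mul_le_of_le_one_right (abs_nonneg (a y)) (hu1 _)
    · simpa [hax] using (ha.tendsto x).norm
  · exact ha.continuousAt.mul (hu.continuousAt.comp (continuousAt_const.div hb.continuousAt hbx))

/- `sinKernel t` is the paper's `hₜ`, and `cfc (cosKernel t) T = T cos(t L^{1/2})`. Since `√x = 0`
for `x ≤ 0`, both vanish on `(-∞, 0)`; writing `√x ^ 2` rather than `x` is what makes `cosKernel t`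
continuous there. -/
noncomputable def sinKernel (t x : ℝ) : ℝ := √x * Real.sin (t / √x)

noncomputable def cosKernel (t x : ℝ) : ℝ := √x ^ 2 * Real.cos (t / √x)

theorem continuous_sinKernel (t : ℝ) : Continuous (sinKernel t) :=
  continuous_mul_comp_div Real.continuous_sqrt Real.continuous_sqrt Real.continuous_sin
    Real.abs_sin_le_one (fun _ h => h) t

theorem continuous_cosKernel (t : ℝ) : Continuous (cosKernel t) :=
  continuous_mul_comp_div (Real.continuous_sqrt.pow 2) Real.continuous_sqrt Real.continuous_cos
    Real.abs_cos_le_one (fun x h => by simp [h]) t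

theorem abs_sinKernel_sub_le (s t x : ℝ) : |sinKernel s x - sinKernel t x| ≤ |s - t| := by
  rcases eq_or_ne (√x) 0 with hx | hx
  · simp [sinKernel, hx]
  calc |sinKernel s x - sinKernel t x| = √x * |Real.sin (s / √x) - Real.sin (t / √x)| := by
        rw [sinKernel, sinKernel, ← mul_sub, abs_mul, abs_of_nonneg (Real.sqrt_nonneg x)]
    _ ≤ √x * |s / √x - t / √x| :=
        mul_le_mul_of_nonneg_left (Real.abs_sin_sub_sin_le _ _) (Real.sqrt_nonneg x)
    _ = |s - t| := by
        rw [← sub_div, abs_div, abs_of_nonneg (Real.sqrt_nonneg x), mul_div_cancel₀ _ hx]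

theorem abs_cosKernel_sub_le (s t x : ℝ) : |cosKernel s x - cosKernel t x| ≤ √x * |s - t| := by
  rcases eq_or_ne (√x) 0 with hx | hx
  · simp [cosKernel, hx]
  calc |cosKernel s x - cosKernel t x| = √x ^ 2 * |Real.cos (s / √x) - Real.cos (t / √x)| := by
        rw [cosKernel, cosKernel, ← mul_sub, abs_mul, abs_of_nonneg (sq_nonneg _)]
    _ ≤ √x ^ 2 * |s / √x - t / √x| :=
        mul_le_mul_of_nonneg_left (Real.abs_cos_sub_cos_le _ _) (sq_nonneg _)
    _ = √x * |s - t| := by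
        rw [← sub_div, abs_div, abs_of_nonneg (Real.sqrt_nonneg x)]
        field_simp

theorem hasDerivAt_sinKernel (x t : ℝ) :
    HasDerivAt (sinKernel · x) (√x * (Real.cos (t / √x) * (1 / √x))) t :=
  (((hasDerivAt_id' t).div_const √x).sin).const_mul √x

theorem hasDerivAt_cosKernel (x t : ℝ) : HasDerivAt (cosKernel · x) (-sinKernel t x) t := by
  refine ((((hasDerivAt_id' t).div_const √x).cos).const_mul (√x ^ 2)).congr_deriv ?_
  rcases eq_or_ne (√x) 0 with hx | hx
  · simp [sinKernel, hx]
  · rw [sinKernel]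
    field_simp

theorem hasDerivAt_mul_sinKernel {x : ℝ} (hx : 0 ≤ x) (t : ℝ) :
    HasDerivAt (fun s => x * sinKernel s x) (cosKernel t x) t := by
  refine ((hasDerivAt_sinKernel x t).const_mul x).congr_deriv ?_
  rcases eq_or_ne (√x) 0 with hx' | hx'
  · simp [cosKernel, (Real.sqrt_eq_zero hx).1 hx']
  · rw [cosKernel, Real.sq_sqrt hx]
    field_simp

section WaveOperators

variable (T : H →L[ℂ] H)

theorem waveOp_eq_cfc_sinKernel (t : ℝ) : waveOp T t = cfc (sinKernel t) T := by
  refine congrArg (cfc · T) (funext fun x => ?_)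
  split_ifs with hx
  · rfl
  · simp [sinKernel, Real.sqrt_eq_zero'.2 (not_lt.1 hx)]

theorem waveOp_zero : waveOp T 0 = 0 := by
  rw [waveOp_eq_cfc_sinKernel, show sinKernel 0 = 0 from funext fun x => by simp [sinKernel]]
  exact cfc_zero ℝ T

theorem norm_waveOp_sub_le (s t : ℝ) : ‖waveOp T s - waveOp T t‖ ≤ |s - t| := by
  rw [waveOp_eq_cfc_sinKernel, waveOp_eq_cfc_sinKernel,
    ← cfc_sub _ _ T (continuous_sinKernel s).continuousOn (continuous_sinKernel t).continuousOn]
  exact norm_cfc_le (abs_nonneg _) fun x _ => abs_sinKernel_sub_le s t x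

theorem continuous_waveOp : Continuous (waveOp T) :=
  (LipschitzWith.of_dist_le_mul (K := 1) fun s t => by
    simpa [dist_eq_norm] using norm_waveOp_sub_le T s t).continuous

theorem hasDerivAt_cfc_cosKernel (t : ℝ) :
    HasDerivAt (fun s => cfc (cosKernel s) T) (-waveOp T t) t := by
  rw [waveOp_eq_cfc_sinKernel, ← cfc_neg]
  refine hasDerivAt_cfc_of_lipschitz_deriv T (C := 1) (fun x _ s => hasDerivAt_cosKernel x s)
    (fun x _ s => ?_) zero_le_one continuous_cosKernel (continuous_sinKernel t).neg
  simp only [neg_sub_neg, one_mul]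
  exact (abs_sinKernel_sub_le t s x).trans_eq (abs_sub_comm t s)

variable {T}

theorem hasDerivAt_cfc_mul_sinKernel (hT : 0 ≤ T) (t : ℝ) :
    HasDerivAt (fun s => cfc (fun x => x * sinKernel s x) T) (cfc (cosKernel t) T) t := by
  refine hasDerivAt_cfc_of_lipschitz_deriv T (C := √(‖T‖ * ‖(1 : H →L[ℂ] H)‖))
    (fun x hx s => hasDerivAt_mul_sinKernel (spectrum_nonneg_of_nonneg hT hx) s)
    (fun x hx s => ?_) (Real.sqrt_nonneg _) (fun s => continuous_id.mul (continuous_sinKernel s))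
    (continuous_cosKernel t)
  refine (abs_cosKernel_sub_le s t x).trans (mul_le_mul_of_nonneg_right ?_ (abs_nonneg _))
  exact Real.sqrt_le_sqrt ((le_abs_self x).trans (spectrum.norm_le_norm_mul_of_mem hx))

theorem cfc_mul_sinKernel (hT : IsSelfAdjoint T) (t : ℝ) :
    cfc (fun x => x * sinKernel t x) T = T * waveOp T t := by
  rw [cfc_mul (fun x => x) _ T continuousOn_id (continuous_sinKernel t).continuousOn, cfc_id' ℝ T,
    waveOp_eq_cfc_sinKernel]

theorem cfc_cosKernel_zero (hT : 0 ≤ T) : cfc (cosKernel 0) T = T := by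
  rw [cfc_congr (g := id) fun x hx => by
    simp [cosKernel, Real.sq_sqrt (spectrum_nonneg_of_nonneg hT hx)]]
  exact cfc_id ℝ T hT.isSelfAdjoint

end WaveOperators

theorem sourceWave_eq_apply_sub {T : H →L[ℂ] H} (hT : 0 ≤ T) {g : ℝ → H} (hg : ContDiff ℝ 2 g)
    (hg0 : g 0 = 0) (hg0' : deriv g 0 = 0) (t : ℝ) :
    sourceWave T g t = T (g t - sourceWave T (deriv (deriv g)) t) := by
  have hparts := integral_comp_sub_apply_add_eq (hasDerivAt_cfc_mul_sinKernel hT)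
    (hasDerivAt_cfc_cosKernel T) (continuous_waveOp T) hg hg0 hg0' t
  simp only [cfc_mul_sinKernel hT.isSelfAdjoint, waveOp_zero, mul_zero, cfc_cosKernel_zero hT,
    zero_apply, zero_add, mul_apply_eq_comp] at hparts
  have hcont : Continuous fun s => waveOp T (t - s) (deriv (deriv g) s) := by
    have := (hg.deriv' (n := 1)).continuous_deriv le_rfl
    have := continuous_waveOp T
    fun_prop
  rw [ContinuousLinearMap.intervalIntegral_comp_comm T (hcont.intervalIntegrable 0 t)] at hparts
  rw [map_sub, ← hparts]
  exact (add_sub_cancel_left _ _).symm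

namespace IsSmoothControl

omit [CompleteSpace H]

variable {K : Submodule ℂ H} {f : ℝ → H}

theorem deriv (hK : IsClosed (K : Set H)) (hf : IsSmoothControl K f) :
    IsSmoothControl K (deriv f) := by
  obtain ⟨hsmooth, hmem, ε, hε, hzero⟩ := hf
  refine ⟨hsmooth.deriv', deriv_mem_of_forall_mem (K := K.restrictScalars ℝ) hK hmem,
    ε / 2, half_pos hε, fun t ht => ?_⟩
  have hloc : f =ᶠ[𝓝 t] fun _ => 0 :=
    (eventually_lt_nhds (ht.trans_lt (half_lt_self hε))).mono fun s hs => hzero s hs.le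
  rw [hloc.deriv_eq, deriv_const]

theorem contDiff (hf : IsSmoothControl K f) (n : ℕ) : ContDiff ℝ n f :=
  hf.1.of_le (by exact_mod_cast le_top)

theorem apply_eq_zero (hf : IsSmoothControl K f) {t : ℝ} (ht : t ≤ 0) : f t = 0 := by
  obtain ⟨-, -, ε, hε, hzero⟩ := hf
  exact hzero t (ht.trans hε.le)

end IsSmoothControl

theorem hasDerivAt_wave (T : H →L[ℂ] H) {f : ℝ → H} (hf : ContDiff ℝ 3 f)
    (hf0 : ∀ s < 0, deriv (deriv f) s = 0) (t : ℝ) :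
    HasDerivAt (wave T f) (wave T (deriv f) t) t :=
  (hf.differentiable (by norm_num) t).hasDerivAt.neg.add <|
    hasDerivAt_integral_comp_sub_apply (continuous_waveOp T) ((hf.deriv' (n := 2)).deriv' (n := 1))
      hf0 t

namespace Setting

variable {L₀ L : H →ₗ.[ℂ] H} {T : H →L[ℂ] H} {K : Submodule ℂ H}

theorem nonneg (hs : Setting L₀ L T K) : 0 ≤ T :=
  (ContinuousLinearMap.nonneg_iff_isPositive T).2 ⟨hs.T_selfadjoint.isSymmetric, hs.T_positive⟩

theorem isClosed_kernel (hs : Setting L₀ L T K) : IsClosed (K : Set H) := by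
  have hK : (K : Set H) = (fun x => (x, (0 : H))) ⁻¹' L₀.adjoint.graph := by
    ext x
    simp [hs.kernel, LinearPMap.mem_graph_iff]
  rw [hK]
  exact (LinearPMap.adjoint_isClosed hs.dense_domain).preimage (by fun_prop)

theorem exists_adjoint_add_apply (hs : Setting L₀ L T K) {x : H} (hx : x ∈ K) (y : H) :
    ∃ h : x + T y ∈ L₀.adjoint.domain, L₀.adjoint ⟨x + T y, h⟩ = y := by
  obtain ⟨hxdom, hx0⟩ := (hs.kernel x).1 hx
  have hTy : T y ∈ L.domain := hs.T_mem_domain y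
  have hTy' : T y ∈ L₀.adjoint.domain := hs.le_adjoint.1 hTy
  refine ⟨L₀.adjoint.domain.add_mem hxdom hTy', ?_⟩
  calc L₀.adjoint ⟨x + T y, _⟩ = L₀.adjoint (⟨x, hxdom⟩ + ⟨T y, hTy'⟩) := rfl
    _ = L ⟨T y, hTy⟩ := by
      rw [LinearPMap.map_add, hx0, zero_add]
      exact (hs.le_adjoint.2 (show ((⟨T y, hTy⟩ : L.domain) : H) = T y from rfl)).symm
    _ = y := hs.T_inv_right y hTy

end Setting

theorem stmt5_general (L₀ L : H →ₗ.[ℂ] H) (T : H →L[ℂ] H) (K : Submodule ℂ H)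
    (hs : Setting L₀ L T K)
    (f : ℝ → H) (hf : IsSmoothControl K f) :
    IsSmoothControl K (deriv f) ∧ IsSmoothControl K (deriv (deriv f)) ∧
    ∀ t : ℝ, 0 ≤ t →
      wave T (deriv f) t = deriv (wave T f) t ∧
      wave T (deriv (deriv f)) t = deriv (deriv (wave T f)) t ∧
      ∃ ht : wave T f t ∈ L₀.adjoint.domain,
        wave T (deriv (deriv f)) t = -(L₀.adjoint ⟨wave T f t, ht⟩) := by
  have hK := hs.isClosed_kernel
  have hd1 := hf.deriv hK
  have hd2 := hd1.deriv hK
  have hd3 := hd2.deriv hK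
  have hwave : ∀ {g}, IsSmoothControl K g → deriv (wave T g) = wave T (deriv g) := fun hg =>
    funext fun t => (hasDerivAt_wave T (hg.contDiff 3)
      (fun s hneg => ((hg.deriv hK).deriv hK).apply_eq_zero hneg.le) t).deriv
  refine ⟨hd1, hd2, fun t _ => ⟨by rw [hwave hf], by rw [hwave hf, hwave hd1], ?_⟩⟩
  have hsplit : wave T f t = -f t + T (-wave T (deriv (deriv f)) t) := by
    have hwave₂ : wave T (deriv (deriv f)) t
        = -deriv (deriv f) t + sourceWave T (deriv (deriv (deriv (deriv f)))) t := rfl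
    rw [hwave₂, neg_add', neg_neg]
    exact congrArg (-f t + ·) (sourceWave_eq_apply_sub hs.nonneg (hd2.contDiff 2)
      (hd2.apply_eq_zero le_rfl) (hd3.apply_eq_zero le_rfl) t)
  obtain ⟨hmem, happly⟩ :=
    hs.exists_adjoint_add_apply (K.neg_mem (hf.2.1 t)) (-wave T (deriv (deriv f)) t)
  rw [hsplit]
  exact ⟨hmem, by rw [happly, neg_neg]⟩

/-- For every `f ∈ M` and `t ≥ 0`: `u^{f'}(t) = (u^f)'(t)` and
`u^{f''}(t) = (u^f)''(t) = −L₀*u^f(t)`, where the time derivatives `f'` and `f''` of the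
control again belong to `M`. -/
theorem stmt5 (L₀ L : H →ₗ.[ℂ] H) (T : H →L[ℂ] H) (K : Submodule ℂ H)
    [Submodule.HasOrthogonalProjection K] (hs : Setting L₀ L T K)
    (f : ℝ → H) (hf : IsSmoothControl K f) :
    IsSmoothControl K (deriv f) ∧ IsSmoothControl K (deriv (deriv f)) ∧
    ∀ t : ℝ, 0 ≤ t →
      wave T (deriv f) t = deriv (wave T f) t ∧
      wave T (deriv (deriv f)) t = deriv (deriv (wave T f)) t ∧
      ∃ ht : wave T f t ∈ L₀.adjoint.domain,
        wave T (deriv (deriv f)) t = -(L₀.adjoint ⟨wave T f t, ht⟩) :=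
  stmt5_general L₀ L T K hs f hf
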